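/- arXiv:2512.18875 — 4 statements merged into one kernel-verified Lean document; each statement's English description precedes it below -/
import Mathlib

section
/- For every even natural number m ≥ 2, in the formal power series ring ℚ⟦X⟧ one has 4 · (coefficient of X^m in (1+X)^{m+3} · ((1+2X)⁻¹)²) = 2m + 4. (This computes the topological Euler characteristic χ(X) = 2m+4 of a smooth complete intersection X of two quadrics in ℂP^{m+2}, via χ(X) = ∫_{P^{m+2}} 4ω² c_m(T_X) with c(T_X) = (1+ω)^{m+3}/(1+2ω)².) -/
/-!
Write `J = (1 + 2X)⁻¹`. Since `(1 + X)² = (1 + 2X) + X²`, raising the exponent of `1 + X` by two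
gives `(1 + X)^(n+2) J = (1 + X)^n + X² (1 + X)^n J`. Reading off coefficients, this turns
`c_k = [X^(2k)] (1 + X)^(2k+1) J` into the recursion `c_(k+1) = c_k` (the polynomial summand has
too small a degree), so `c_k = 1`, and `d_k = [X^(2k)] (1 + X)^(2k+3) J²` into
`d_(k+1) = c_(k+1) + d_k`, so `d_k = k + 1`.
-/

open PowerSeries

theorem coeff_one_add_X_pow {R : Type*} [Semiring R] (n k : ℕ) :
    coeff k ((1 + X : R⟦X⟧) ^ n) = n.choose k := by
  rw [← Polynomial.coe_X, ← Polynomial.coe_one, ← Polynomial.coe_add, ← Polynomial.coe_pow,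
    Polynomial.coeff_coe, Polynomial.coeff_one_add_X_pow]

section

variable {R : Type*} [CommRing R] {J : R⟦X⟧}

theorem constantCoeff_eq_one_of_one_add_two_X_mul_eq_one (hJ : (1 + 2 * X) * J = 1) :
    constantCoeff J = 1 := by
  simpa using congrArg constantCoeff hJ

theorem coeff_two_mul_one_add_X_pow_mul (hJ : (1 + 2 * X) * J = 1) (k : ℕ) :
    coeff (2 * k) ((1 + X) ^ (2 * k + 1) * J) = 1 := by
  induction k with
  | zero => simp [constantCoeff_eq_one_of_one_add_two_X_mul_eq_one hJ]
  | succ k ih =>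
    have hstep : (1 + X) ^ (2 * (k + 1) + 1) * J
        = (1 + X) ^ (2 * k + 1) + (1 + X) ^ (2 * k + 1) * J * X ^ 2 := by
      linear_combination (1 + X) ^ (2 * k + 1) * hJ
    rw [hstep, map_add, show 2 * (k + 1) = 2 * k + 2 by ring, coeff_mul_X_pow, ih,
      coeff_one_add_X_pow, Nat.choose_eq_zero_of_lt (by omega), Nat.cast_zero, zero_add]

theorem coeff_two_mul_one_add_X_pow_mul_sq (hJ : (1 + 2 * X) * J = 1) (k : ℕ) :
    coeff (2 * k) ((1 + X) ^ (2 * k + 3) * J ^ 2) = (k + 1 : R) := by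
  induction k with
  | zero => simp [constantCoeff_eq_one_of_one_add_two_X_mul_eq_one hJ]
  | succ k ih =>
    have hstep : (1 + X) ^ (2 * (k + 1) + 3) * J ^ 2
        = (1 + X) ^ (2 * (k + 1) + 1) * J + (1 + X) ^ (2 * k + 3) * J ^ 2 * X ^ 2 := by
      linear_combination (1 + X) ^ (2 * k + 3) * J * hJ
    rw [hstep, map_add, coeff_two_mul_one_add_X_pow_mul hJ, show 2 * (k + 1) = 2 * k + 2 by ring,
      coeff_mul_X_pow, ih]
    push_cast
    ring

end

theorem euler_char_coeff_general (m : ℕ) (hm : Even m) :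
    4 * (PowerSeries.coeff (R := ℚ) m
      ((1 + PowerSeries.X) ^ (m + 3) * ((1 + 2 * PowerSeries.X)⁻¹) ^ 2))
      = 2 * (m : ℚ) + 4 := by
  obtain ⟨k, rfl⟩ := hm
  have hinv : (1 + 2 * X : ℚ⟦X⟧) * (1 + 2 * X)⁻¹ = 1 := PowerSeries.mul_inv_cancel _ (by simp)
  rw [← two_mul, coeff_two_mul_one_add_X_pow_mul_sq hinv]
  push_cast
  ring

/-- For every even natural number `m ≥ 2`, in `ℚ⟦X⟧` one has
`4 * coeff X^m ((1+X)^(m+3) * ((1+2X)⁻¹)^2) = 2m + 4`. -/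
theorem euler_char_coeff (m : ℕ) (hm : Even m) (h2 : 2 ≤ m) :
    4 * (PowerSeries.coeff (R := ℚ) m
      ((1 + PowerSeries.X) ^ (m + 3) * ((1 + 2 * PowerSeries.X)⁻¹) ^ 2))
      = 2 * (m : ℚ) + 4 :=
  euler_char_coeff_general m hm
end

section
/- For every even natural number m ≥ 2, the finite sum ∑_{k=0}^{m} (k+1)·(−2)^k · binom(m+3, m−k) equals (m+2)/2 (an integer since m is even). (This is the explicit evaluation of the coefficient of X^m in (1+X)^{m+3}(1+2X)^{−2} used to compute the Euler characteristic of a complete intersection of two quadrics.) -/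
open Finset

/-- Alternating partial sum `V(m) = ∑_{j=0}^m (-2)^{m-j} C(m+2,j)`. -/
lemma Vval (m : ℕ) :
    ∑ j ∈ range (m + 1), (-2 : ℚ) ^ (m - j) * (Nat.choose (m + 2) j : ℚ)
      = ((-1 : ℚ) ^ m - 1) / 4 + ((m : ℚ) + 2) / 2 := by
  induction m with
  | zero => norm_num
  | succ m ih =>
    have hpeel : ∑ j ∈ range (m + 2), (-2 : ℚ) ^ (m + 1 - j) * (Nat.choose (m + 3) j : ℚ)
        = ∑ i ∈ range (m + 1), (-2 : ℚ) ^ (m - i) * (Nat.choose (m + 3) (i + 1) : ℚ)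
          + (-2 : ℚ) ^ (m + 1) := by
      rw [Finset.sum_range_succ']
      simp only [Nat.choose_zero_right, Nat.cast_one, mul_one, Nat.sub_zero]
      congr 1
      refine Finset.sum_congr rfl fun i hi => ?_
      congr 2
      omega
    have hpascal : ∀ i, (Nat.choose (m + 3) (i + 1) : ℚ)
        = (Nat.choose (m + 2) i : ℚ) + (Nat.choose (m + 2) (i + 1) : ℚ) := by
      intro i
      rw [show m + 3 = (m + 2) + 1 from rfl, Nat.choose_succ_succ]
      push_cast; ring
    have hS2 : ∑ i ∈ range (m + 1), (-2 : ℚ) ^ (m - i) * (Nat.choose (m + 2) (i + 1) : ℚ)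
        = -2 * (∑ j ∈ range (m + 1), (-2 : ℚ) ^ (m - j) * (Nat.choose (m + 2) j : ℚ))
          + ((m : ℚ) + 2) - (-2 : ℚ) ^ (m + 1) := by
      have hW : ∑ j ∈ range (m + 2), (-2 : ℚ) ^ (m + 1 - j) * (Nat.choose (m + 2) j : ℚ)
          = ∑ i ∈ range (m + 1), (-2 : ℚ) ^ (m - i) * (Nat.choose (m + 2) (i + 1) : ℚ)
            + (-2 : ℚ) ^ (m + 1) := by
        rw [Finset.sum_range_succ']
        simp only [Nat.choose_zero_right, Nat.cast_one, mul_one, Nat.sub_zero]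
        congr 1
        refine Finset.sum_congr rfl fun i hi => ?_
        congr 2
        omega
      have hW2 : ∑ j ∈ range (m + 2), (-2 : ℚ) ^ (m + 1 - j) * (Nat.choose (m + 2) j : ℚ)
          = -2 * (∑ j ∈ range (m + 1), (-2 : ℚ) ^ (m - j) * (Nat.choose (m + 2) j : ℚ))
            + ((m : ℚ) + 2) := by
        rw [Finset.sum_range_succ, Nat.choose_succ_self_right]
        rw [Finset.mul_sum]
        push_cast
        congr 1
        · refine Finset.sum_congr rfl fun j hj => ?_
          rw [Finset.mem_range] at hj
          rw [show m + 1 - j = (m - j) + 1 by omega, pow_succ]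
          ring
        · rw [Nat.sub_self, pow_zero]; ring
      linarith [hW, hW2]
    calc ∑ j ∈ range (m + 1 + 1), (-2 : ℚ) ^ (m + 1 - j) * (Nat.choose (m + 1 + 2) j : ℚ)
        = ∑ i ∈ range (m + 1), (-2 : ℚ) ^ (m - i) * (Nat.choose (m + 3) (i + 1) : ℚ)
          + (-2 : ℚ) ^ (m + 1) := hpeel
      _ = (∑ j ∈ range (m + 1), (-2 : ℚ) ^ (m - j) * (Nat.choose (m + 2) j : ℚ))
          + (∑ i ∈ range (m + 1), (-2 : ℚ) ^ (m - i) * (Nat.choose (m + 2) (i + 1) : ℚ))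
          + (-2 : ℚ) ^ (m + 1) := by
            rw [← Finset.sum_add_distrib]
            congr 1
            refine Finset.sum_congr rfl fun i _ => ?_
            rw [hpascal]; ring
      _ = -(∑ j ∈ range (m + 1), (-2 : ℚ) ^ (m - j) * (Nat.choose (m + 2) j : ℚ))
          + ((m : ℚ) + 2) := by rw [hS2]; ring
      _ = ((-1 : ℚ) ^ (m + 1) - 1) / 4 + ((m + 1 : ℕ) + 2 : ℚ) / 2 := by
            rw [ih, pow_succ]; push_cast; ring

/-- `V3(m) = ∑_{j=0}^m (-2)^{m-j} C(m+3,j)`. -/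
lemma V3val (m : ℕ) :
    ∑ j ∈ range (m + 1), (-2 : ℚ) ^ (m - j) * (Nat.choose (m + 3) j : ℚ)
      = ((Nat.choose (m + 3) (m + 1) : ℚ)
          - (((-1 : ℚ) ^ (m + 1) - 1) / 4 + ((m : ℚ) + 3) / 2)) / 2 := by
  have h := Vval (m + 1)
  rw [Finset.sum_range_succ] at h
  simp only [Nat.sub_self, pow_zero, one_mul, show m + 1 + 2 = m + 3 from rfl] at h
  -- h : inner sum + cast stuff = rhs; inner sum = -2 * V3
  have hinner : ∑ j ∈ range (m + 1), (-2 : ℚ) ^ (m + 1 - j) * (Nat.choose (m + 1 + 2) j : ℚ)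
      = -2 * ∑ j ∈ range (m + 1), (-2 : ℚ) ^ (m - j) * (Nat.choose (m + 3) j : ℚ) := by
    rw [Finset.mul_sum]
    refine Finset.sum_congr rfl fun j hj => ?_
    rw [Finset.mem_range] at hj
    rw [show m + 1 - j = (m - j) + 1 by omega, pow_succ,
      show m + 1 + 2 = m + 3 from rfl]
    ring
  rw [hinner] at h
  push_cast at h ⊢
  linarith [h]

/-- For every even natural number `m ≥ 2`,
`∑_{k=0}^{m} (k+1)·(−2)^k · C(m+3, m−k) = (m+2)/2` in `ℚ`. -/
theorem sum_binom_eval (m : ℕ) (hm : Even m) (h2 : 2 ≤ m) :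
    ∑ k ∈ Finset.range (m + 1),
      ((k : ℚ) + 1) * (-2 : ℚ) ^ k * (Nat.choose (m + 3) (m - k) : ℚ)
      = ((m : ℚ) + 2) / 2 := by
  rw [← Finset.sum_range_reflect]
  have key : ∀ j ∈ range (m + 1),
      (((m + 1 - 1 - j : ℕ) : ℚ) + 1) * (-2 : ℚ) ^ (m + 1 - 1 - j)
          * (Nat.choose (m + 3) (m - (m + 1 - 1 - j)) : ℚ)
      = (-2 : ℚ) ^ (m - j) * (((m : ℚ) + 3) * (Nat.choose (m + 2) j : ℚ))
        - (-2 : ℚ) ^ (m - j) * (2 * (Nat.choose (m + 3) j : ℚ)) := by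
    intro j hj
    rw [Finset.mem_range] at hj
    have hj' : j ≤ m := by omega
    rw [show m + 1 - 1 - j = m - j by omega, show m - (m - j) = j by omega]
    have hcast : ((m - j : ℕ) : ℚ) = (m : ℚ) - j := by
      push_cast [hj']; ring
    rw [hcast]
    have hnat : (m + 3) * Nat.choose (m + 2) j = Nat.choose (m + 3) j * (m + 3 - j) := by
      have h1 : Nat.choose (m + 2) j = Nat.choose (m + 2) (m + 2 - j) :=
        (Nat.choose_symm (by omega)).symm
      have h2' : Nat.succ (m + 2) * Nat.choose (m + 2) (m + 2 - j)
          = Nat.choose (m + 3) (m + 2 - j + 1) * Nat.succ (m + 2 - j) :=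
        Nat.add_one_mul_choose_eq (m + 2) (m + 2 - j)
      have h3 : m + 2 - j + 1 = m + 3 - j := by omega
      have h4 : Nat.choose (m + 3) (m + 3 - j) = Nat.choose (m + 3) j :=
        Nat.choose_symm (by omega)
      rw [h1]
      calc (m + 3) * Nat.choose (m + 2) (m + 2 - j)
          = Nat.choose (m + 3) (m + 3 - j) * (m + 3 - j) := by
            rw [← h3]; exact h2'
        _ = Nat.choose (m + 3) j * (m + 3 - j) := by rw [h4]
    have hQ : ((m : ℚ) + 3) * (Nat.choose (m + 2) j : ℚ)
        = (Nat.choose (m + 3) j : ℚ) * ((m : ℚ) + 3 - j) := by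
      have := congrArg (fun n : ℕ => (n : ℚ)) hnat
      push_cast [show j ≤ m + 3 by omega] at this
      linarith [this]
    have : ((m : ℚ) - j + 1) * (Nat.choose (m + 3) j : ℚ)
        = ((m : ℚ) + 3) * (Nat.choose (m + 2) j : ℚ) - 2 * (Nat.choose (m + 3) j : ℚ) := by
      rw [hQ]; ring
    calc ((m : ℚ) - j + 1) * (-2 : ℚ) ^ (m - j) * (Nat.choose (m + 3) j : ℚ)
        = (-2 : ℚ) ^ (m - j) * (((m : ℚ) - j + 1) * (Nat.choose (m + 3) j : ℚ)) := by ring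
      _ = _ := by rw [this]; ring
  rw [Finset.sum_congr rfl key, Finset.sum_sub_distrib]
  have e1 : ∑ j ∈ range (m + 1), (-2 : ℚ) ^ (m - j) * (((m : ℚ) + 3) * (Nat.choose (m + 2) j : ℚ))
      = ((m : ℚ) + 3) * (((-1 : ℚ) ^ m - 1) / 4 + ((m : ℚ) + 2) / 2) := by
    rw [← Vval, Finset.mul_sum]
    exact Finset.sum_congr rfl fun j _ => by ring
  have e2 : ∑ j ∈ range (m + 1), (-2 : ℚ) ^ (m - j) * (2 * (Nat.choose (m + 3) j : ℚ))
      = 2 * (((Nat.choose (m + 3) (m + 1) : ℚ)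
          - (((-1 : ℚ) ^ (m + 1) - 1) / 4 + ((m : ℚ) + 3) / 2)) / 2) := by
    rw [← V3val, Finset.mul_sum]
    exact Finset.sum_congr rfl fun j _ => by ring
  rw [e1, e2]
  have hchoose : 2 * Nat.choose (m + 3) (m + 1) = (m + 3) * (m + 2) := by
    have h1 : Nat.choose (m + 3) (m + 1) = Nat.choose (m + 3) 2 := by
      rw [← Nat.choose_symm (show m + 1 ≤ m + 3 by omega), show m + 3 - (m + 1) = 2 by omega]
    rw [h1, Nat.choose_two_right, show m + 3 - 1 = m + 2 from rfl]
    have hev : Even ((m + 3) * (m + 2)) := by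
      rw [Nat.mul_comm]; exact Nat.even_mul_succ_self _
    obtain ⟨k, hk⟩ := hev
    omega
  have hchooseQ : (Nat.choose (m + 3) (m + 1) : ℚ) = ((m : ℚ) + 3) * ((m : ℚ) + 2) / 2 := by
    have := congrArg (fun n : ℕ => (n : ℚ)) hchoose
    push_cast at this
    linarith [this]
  have h1 : (-1 : ℚ) ^ m = 1 := hm.neg_one_pow
  have h1' : (-1 : ℚ) ^ (m + 1) = -1 := (Even.add_one hm).neg_one_pow
  rw [hchooseQ, h1, h1']
  ring
end

section
/- Let m ≥ 2 be an even natural number and let λ_0, …, λ_{m+2} be pairwise distinct complex numbers. Then for every polynomial Q ∈ ℂ[x] with deg Q ≤ m/2, both ∑_{i=0}^{m+2} Q(λ_i)² · (∏_{j≠i}(λ_i − λ_j))⁻¹ = 0 and ∑_{i=0}^{m+2} λ_i · Q(λ_i)² · (∏_{j≠i}(λ_i − λ_j))⁻¹ = 0. (Geometrically: the m/2-plane spanned by the points P_0, …, P_{m/2} with i-th homogeneous coordinate of P_k equal to λ_i^k / √(∏_{j≠i}(λ_i − λ_j)) is contained in the complete intersection of the two quadrics ∑ x_i² = 0 and ∑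 λ_i x_i² = 0 in ℂP^{m+2}.) -/
open Polynomial Finset

lemma coeff_lagrange_basis {F ι : Type*} [Field F] [DecidableEq ι] {s : Finset ι}
    {v : ι → F} {i : ι} (hi : i ∈ s) :
    (Lagrange.basis s v i).coeff (#s - 1) = Lagrange.nodalWeight s v i := by
  rw [Lagrange.basis_eq_prod_sub_inv_mul_nodal_div hi,
    ← Lagrange.nodal_erase_eq_nodal_div hi, coeff_C_mul]
  have h1 : (Lagrange.nodal (s.erase i) v).natDegree = #s - 1 := by
    rw [Lagrange.natDegree_nodal, card_erase_of_mem hi]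
  have := Lagrange.nodal_monic (s := s.erase i) (v := v)
  rw [show #s - 1 = (Lagrange.nodal (s.erase i) v).natDegree from h1.symm,
    this.coeff_natDegree, mul_one]

lemma sum_eval_mul_nodalWeight {n : ℕ} (v : Fin n → ℂ) (hv : Function.Injective v)
    (P : Polynomial ℂ) (hP : P.degree < (n - 1 : ℕ)) :
    ∑ i : Fin n, P.eval (v i) * (∏ j ∈ Finset.univ.erase i, (v i - v j))⁻¹ = 0 := by
  have hvs : Set.InjOn v (Finset.univ : Finset (Fin n)) := hv.injOn
  have hcard : #(Finset.univ : Finset (Fin n)) = n := by simp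
  have hP' : P.degree < #(Finset.univ : Finset (Fin n)) := by
    rw [hcard]
    exact hP.trans_le (by exact_mod_cast Nat.cast_le.mpr (Nat.sub_le n 1))
  have heq := Lagrange.eq_interpolate hvs hP'
  have h0 : P.coeff (n - 1) = 0 := coeff_eq_zero_of_degree_lt hP
  rw [heq, Lagrange.interpolate_apply, finset_sum_coeff] at h0
  rw [← h0]
  refine Finset.sum_congr rfl fun i _ => ?_
  have hb : (Lagrange.basis Finset.univ v i).coeff (n - 1) = Lagrange.nodalWeight Finset.univ v i := by
    have h := coeff_lagrange_basis (v := v) (mem_univ i)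
    rwa [hcard] at h
  rw [coeff_C_mul, hb, Lagrange.nodalWeight, prod_inv_distrib]

/-- Let `m ≥ 2` be even and `λ_0, …, λ_{m+2}` pairwise distinct complex numbers.
For every polynomial `Q` with `deg Q ≤ m/2`, both
`∑_i Q(λ_i)² · (∏_{j≠i}(λ_i − λ_j))⁻¹ = 0` and
`∑_i λ_i · Q(λ_i)² · (∏_{j≠i}(λ_i − λ_j))⁻¹ = 0`. -/
theorem plane_in_two_quadrics (m : ℕ) (hm : Even m) (h2 : 2 ≤ m)
    (l : Fin (m + 3) → ℂ) (hl : Function.Injective l)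
    (Q : Polynomial ℂ) (hQ : Q.degree ≤ (m / 2 : ℕ)) :
    (∑ i : Fin (m + 3),
        Q.eval (l i) ^ 2 * (∏ j ∈ Finset.univ.erase i, (l i - l j))⁻¹ = 0) ∧
    (∑ i : Fin (m + 3),
        l i * Q.eval (l i) ^ 2 * (∏ j ∈ Finset.univ.erase i, (l i - l j))⁻¹ = 0) := by
  have hd : (Q ^ 2).degree ≤ (m : WithBot ℕ) := by
    calc (Q ^ 2).degree ≤ Q.degree + Q.degree := by
          rw [pow_two]; exact degree_mul_le Q Q
      _ ≤ ((m / 2 : ℕ) : WithBot ℕ) + ((m / 2 : ℕ) : WithBot ℕ) := add_le_add hQ hQ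
      _ = ((m / 2 + m / 2 : ℕ) : WithBot ℕ) := by push_cast; ring
      _ ≤ (m : WithBot ℕ) := by
          have h : m / 2 + m / 2 ≤ m := by omega
          exact_mod_cast Nat.cast_le.mpr h
  constructor
  · have := sum_eval_mul_nodalWeight l hl (Q ^ 2)
      (by rw [show m + 3 - 1 = m + 2 from rfl]
          refine hd.trans_lt ?_
          have h : m < m + 2 := by omega
          exact_mod_cast Nat.cast_lt.mpr h)
    simpa [eval_pow] using this
  · have := sum_eval_mul_nodalWeight l hl (X * Q ^ 2)
      (by rw [show m + 3 - 1 = m + 2 from rfl]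
          calc (X * Q ^ 2).degree ≤ X.degree + (Q ^ 2).degree := degree_mul_le _ _
            _ ≤ 1 + (m : WithBot ℕ) := add_le_add (degree_X_le) hd
            _ < ((m + 2 : ℕ) : WithBot ℕ) := by
                have h : 1 + m < m + 2 := by omega
                exact_mod_cast Nat.cast_lt.mpr h)
    simpa [eval_pow, mul_comm] using this
end

section
/- Let m ≥ 4 be an even natural number. Consider the ℚ-vector space with basis w, ζ_0, …, ζ_{m+2} equipped with the symmetric bilinear form ⟨·,·⟩ determined by: ⟨w,w⟩ = 4; ⟨w,ζ_i⟩ = 1 for all 0 ≤ i ≤ m+2; ⟨ζ_i,ζ_i⟩ = (−1)^{m/2}(⌊m/4⌋+1) for all i; and ⟨ζ_i,ζ_j⟩ = (−1)^{m/2−2}(⌊(m/2−2)/2⌋+1) for all i ≠ j. Define ζ := ((m/2+1)/(m+1))·w − (1/(m+1))·∑_{i=0}^{m+2} ζ_i and ζ_{−1} := 2ζ − w. Then the determinant of the (m+4)×(m+4) Gram matrix (⟨ζ_a, ζ_b⟩)_{a,b ∈ {−1,0,1,…,m+2}} equals (−1)^{m+3} if m ≡ 2 (mod 4), and equals 1 if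 m ≡ 0 (mod 4). -/
/-!
Write `w = ω^{m/2}` and `S = ∑ ζ_i`; then `ζ_{-1} = 2ζ - w = (m + 1)⁻¹ • (w - 2 • S)`.
For vectors `z_0, …, z_{n-1}` with `⟨z_i, z_i⟩ = a`, `⟨z_i, z_j⟩ = b` and constant `⟨w, z_i⟩ = f`,
the Gram matrix of `t • w + c • S, z_0, …, z_{n-1}` has a constant border and inner block
`(a - b) • 1 + b • J`. It is `(a - b) • 1` plus a rank-two matrix, so the Weinstein–Aronszajn
identity computes its determinant as `t² (a - b)^(n-1) ((a + (n - 1) b) ⟨w, w⟩ - n f²)`: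
adding multiples of `S` to the border vector does not change it. For Reid's numbers
`a - b = (-1)^{m/2}` and `4 (a + (m + 2) b) - (m + 3) = (-1)^{m/2} (m + 1)²`, which cancels the
factor `t² = (m + 1)⁻²` and leaves `(-1)^{m/2}`.
-/

open Matrix

theorem sum_ite_eq_add_card_sub_one_mul {R ι : Type*} [Ring R] [Fintype ι] [DecidableEq ι]
    (a b : R) (i : ι) :
    ∑ j, (if j = i then a else b) = a + (Fintype.card ι - 1) * b := by
  rw [← Finset.add_sum_erase _ _ (Finset.mem_univ i), if_pos rfl,
    Finset.sum_congr rfl fun j hj => if_neg (Finset.ne_of_mem_erase hj), Finset.sum_const,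
    Finset.card_erase_of_mem (Finset.mem_univ i), Finset.card_univ, nsmul_eq_mul,
    Nat.cast_pred (Fintype.card_pos_iff.mpr ⟨i⟩)]

section BorderedMatrix

variable {K ι : Type*} [Field K] [DecidableEq ι]

def borderedMatrix (e f a b : K) : Matrix (Option ι) (Option ι) K :=
  of fun p q =>
    match p, q with
    | none, none => e
    | none, some _ => f
    | some _, none => f
    | some i, some j => if i = j then a else b

theorem det_borderedMatrix [Fintype ι] [Nonempty ι] (e f a b : K) (hab : a ≠ b) :
    (borderedMatrix (ι := ι) e f a b).det =
      (a - b) ^ (Fintype.card ι - 1) *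
        ((a + (Fintype.card ι - 1) * b) * e - Fintype.card ι * f ^ 2) := by
  set n := Fintype.card ι
  set A : Matrix (Option ι) (Fin 2) K := of fun p => ![p.elim 1 fun _ => 0, 1]
  set W : Matrix (Fin 2) (Fin 2) K := !![e + 2 * b - a - 2 * f, f - b; f - b, b]
  have hc : a - b ≠ 0 := sub_ne_zero.mpr hab
  have hM : borderedMatrix e f a b = (a - b) • (1 + A * ((a - b)⁻¹ • W * Aᵀ)) := by
    ext (_ | i) (_ | j) <;>
      simp only [borderedMatrix, A, W, mul_apply, Fin.sum_univ_two, one_apply, Matrix.smul_apply,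
        Matrix.add_apply, transpose_apply, of_apply, smul_eq_mul, Option.elim, cons_val_zero,
        cons_val_one, cons_val', cons_val_fin_one, Option.some.injEq, reduceCtorEq, if_true,
        if_false, empty_val']
    · field_simp; ring
    · field_simp; ring
    · field_simp; ring
    · split_ifs <;> field_simp <;> ring
  have hAA : Aᵀ * A = !![1, 1; 1, (n : K) + 1] := by
    ext i j
    fin_cases i <;> fin_cases j <;> simp [A, n, mul_apply, Fintype.sum_option, add_comm]
  obtain ⟨k, hk⟩ : ∃ k, n = k + 1 := Nat.exists_eq_add_one.mpr Fintype.card_pos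
  calc _ = (a - b) ^ (n + 1) * (1 + (a - b)⁻¹ • W * (Aᵀ * A)).det := by
        rw [hM, det_smul, det_one_add_mul_comm, Fintype.card_option, Matrix.mul_assoc]
    _ = _ := by
        rw [hAA, Matrix.smul_mul, mul_fin_two, one_fin_two]
        simp only [smul_of, of_add_of, smul_cons, smul_empty, add_cons, empty_add_empty, head_cons,
          tail_cons, smul_eq_mul, det_fin_two_of, hk]
        push_cast
        field_simp
        ring

section Gram

variable {V : Type*} [AddCommGroup V] [Module K V] (B : V →ₗ[K] V →ₗ[K] K) {z : ι → V} {a b : K}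

theorem gram_option_elim_eq_borderedMatrix (x : V) {f : K} (hxz : ∀ i, B x (z i) = f)
    (hzx : ∀ i, B (z i) x = f) (hzz : ∀ i, B (z i) (z i) = a)
    (hzz' : ∀ i j, i ≠ j → B (z i) (z j) = b) :
    (of fun p q : Option ι => B (p.elim x z) (q.elim x z)) = borderedMatrix (B x x) f a b := by
  ext (_ | i) (_ | j)
  · rfl
  · exact hxz j
  · exact hzx i
  · dsimp only [borderedMatrix, of_apply, Option.elim]
    split_ifs with h
    · rw [h, hzz]
    · exact hzz' i j h

variable [Fintype ι]

theorem bilin_apply_sum (hzz : ∀ i, B (z i) (z i) = a) (hzz' : ∀ i j, i ≠ j → B (z i) (z j) = b)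
    (i : ι) : B (z i) (∑ j, z j) = a + (Fintype.card ι - 1) * b := by
  rw [map_sum, ← sum_ite_eq_add_card_sub_one_mul a b i]
  refine Finset.sum_congr rfl fun j _ => ?_
  split_ifs with h
  · rw [h, hzz]
  · exact hzz' i j (Ne.symm h)

theorem bilin_sum_apply (hzz : ∀ i, B (z i) (z i) = a) (hzz' : ∀ i j, i ≠ j → B (z i) (z j) = b)
    (i : ι) : B (∑ j, z j) (z i) = a + (Fintype.card ι - 1) * b := by
  rw [map_sum, LinearMap.sum_apply, ← sum_ite_eq_add_card_sub_one_mul a b i]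
  refine Finset.sum_congr rfl fun j _ => ?_
  split_ifs with h
  · rw [h, hzz]
  · exact hzz' j i h

variable {w : V} {e f : K}

theorem det_gram_smul_add_smul_sum [Nonempty ι] (hww : B w w = e) (hwz : ∀ i, B w (z i) = f)
    (hzw : ∀ i, B (z i) w = f) (hzz : ∀ i, B (z i) (z i) = a)
    (hzz' : ∀ i j, i ≠ j → B (z i) (z j) = b) (hab : a ≠ b) (t c : K) :
    (of fun p q : Option ι =>
        B (p.elim (t • w + c • ∑ i, z i) z) (q.elim (t • w + c • ∑ i, z i) z)).det =
      t ^ 2 * (a - b) ^ (Fintype.card ι - 1) *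
        ((a + (Fintype.card ι - 1) * b) * e - Fintype.card ι * f ^ 2) := by
  have hwS : B w (∑ i, z i) = Fintype.card ι * f := by simp [map_sum, hwz]
  have hSw : B (∑ i, z i) w = Fintype.card ι * f := by simp [map_sum, LinearMap.sum_apply, hzw]
  have hSS : B (∑ i, z i) (∑ i, z i) = Fintype.card ι * (a + (Fintype.card ι - 1) * b) := by
    rw [map_sum (B (∑ i, z i))]
    simp only [bilin_sum_apply B hzz hzz', Finset.sum_const, Finset.card_univ, nsmul_eq_mul]
  rw [gram_option_elim_eq_borderedMatrix B _ (f := t * f + c * (a + (Fintype.card ι - 1) * b))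
    _ _ hzz hzz', det_borderedMatrix _ _ _ _ hab]
  · simp only [map_add, map_smul, LinearMap.add_apply, LinearMap.smul_apply, smul_eq_mul, hww,
      hwS, hSw, hSS]
    ring
  · intro i
    simp only [map_add, map_smul, LinearMap.add_apply, LinearMap.smul_apply, smul_eq_mul, hwz,
      bilin_sum_apply B hzz hzz']
  · intro i
    simp only [map_add, map_smul, smul_eq_mul, hzw, bilin_apply_sum B hzz hzz']

end Gram

end BorderedMatrix

/-- Both of Reid's intersection numbers are values of this function:
`⟨ζ_i, ζ_i⟩ = reidNumber (m / 2)` and `⟨ζ_i, ζ_j⟩ = reidNumber (m / 2 - 2)` for `i ≠ j`. -/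
def reidNumber (d : ℕ) : ℚ := (-1) ^ d * (d / 2 + 1 : ℕ)

theorem reidNumber_add_two_sub (d : ℕ) : reidNumber (d + 2) - reidNumber d = (-1) ^ d := by
  rw [reidNumber, reidNumber, Nat.add_div_right d two_pos]
  push_cast
  ring

theorem four_mul_reidNumber_rowSum_sub (d : ℕ) :
    4 * (reidNumber (d + 2) + (2 * d + 6) * reidNumber d) - (2 * d + 7) =
      (-1) ^ d * (2 * d + 5 : ℚ) ^ 2 := by
  rw [reidNumber, reidNumber, Nat.add_div_right d two_pos, pow_add, neg_one_sq, mul_one]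
  obtain ⟨q, rfl | rfl⟩ := Nat.even_or_odd' d
  · rw [Nat.mul_div_cancel_left q two_pos, (even_two_mul q).neg_one_pow]
    push_cast
    ring
  · rw [show (2 * q + 1) / 2 = q by omega, (odd_two_mul_add_one q).neg_one_pow]
    push_cast
    ring

theorem gram_det_two_quadrics_general (m : ℕ) (h4 : 4 ≤ m)
    {V : Type*} [AddCommGroup V] [Module ℚ V]
    (B : V →ₗ[ℚ] V →ₗ[ℚ] ℚ)
    (w : V) (z : Fin (m + 3) → V)
    (hww : B w w = 4)
    (hwz : ∀ i, B w (z i) = 1)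
    (hzw : ∀ i, B (z i) w = 1)
    (hzz : ∀ i, B (z i) (z i) = (-1 : ℚ) ^ (m / 2) * (m / 4 + 1 : ℕ))
    (hzz' : ∀ i j, i ≠ j →
      B (z i) (z j) = (-1 : ℚ) ^ (m / 2 - 2) * ((m / 2 - 2) / 2 + 1 : ℕ)) :
    letI zeta : V := (((m : ℚ) / 2 + 1) / ((m : ℚ) + 1)) • w
      - (1 / ((m : ℚ) + 1)) • ∑ i : Fin (m + 3), z i
    letI v : Option (Fin (m + 3)) → V :=
      fun a => Option.elim a ((2 : ℚ) • zeta - w) z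
    letI G : Matrix (Option (Fin (m + 3))) (Option (Fin (m + 3))) ℚ :=
      Matrix.of fun a b => B (v a) (v b)
    (m % 4 = 2 → G.det = (-1 : ℚ) ^ (m + 3)) ∧ (m % 4 = 0 → G.det = 1) := by
  set x : V := (2 : ℚ) • ((((m : ℚ) / 2 + 1) / ((m : ℚ) + 1)) • w
      - (1 / ((m : ℚ) + 1)) • ∑ i : Fin (m + 3), z i) - w with hx
  suffices hdet : m % 2 = 0 →
      (Matrix.of fun p q : Option (Fin (m + 3)) => B (p.elim x z) (q.elim x z)).det =
        (-1) ^ (m / 2) by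
    refine ⟨fun h => ?_, fun h => ?_⟩ <;> rw [hdet (by omega)]
    · rw [Odd.neg_one_pow (Nat.odd_iff.mpr (by omega)), Odd.neg_one_pow (Nat.odd_iff.mpr (by omega))]
    · exact Even.neg_one_pow (Nat.even_iff.mpr (by omega))
  intro hm
  obtain ⟨d, rfl⟩ : ∃ d, m = 2 * d + 4 := ⟨m / 2 - 2, by omega⟩
  have hzz : ∀ i, B (z i) (z i) = reidNumber (d + 2) := by
    rw [show (2 * d + 4) / 4 = (d + 2) / 2 by omega, show (2 * d + 4) / 2 = d + 2 by omega] at hzz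
    exact hzz
  have hzz' : ∀ i j, i ≠ j → B (z i) (z j) = reidNumber d := by
    rw [show (2 * d + 4) / 2 - 2 = d by omega] at hzz'
    exact hzz'
  have hab : reidNumber (d + 2) - reidNumber d = (-1) ^ d := reidNumber_add_two_sub d
  have hx' : x = (2 * d + 5 : ℚ)⁻¹ • w + (-2 * (2 * d + 5 : ℚ)⁻¹) • ∑ i, z i := by
    rw [hx]
    match_scalars <;> field_simp <;> ring
  rw [hx', det_gram_smul_add_smul_sum B hww hwz hzw hzz hzz' (sub_ne_zero.mp (by simp [hab]))]
  have hsq : ((-1 : ℚ) ^ d) ^ 2 = 1 := by rw [← pow_mul, mul_comm, pow_mul, neg_one_sq, one_pow]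
  rw [Fintype.card_fin, hab, show 2 * d + 4 + 3 - 1 = 2 * (d + 3) by omega, pow_mul, hsq, one_pow,
    show (2 * d + 4) / 2 = d + 2 by omega, pow_add, neg_one_sq, mul_one]
  push_cast
  field_simp
  linear_combination four_mul_reidNumber_rowSum_sub d

/-- Determinant of the Gram matrix of `ζ_{-1} = 2ζ - ω^{m/2}, ζ_0, …, ζ_{m+2}`
in the middle cohomology of an even-dimensional complete intersection of two
quadrics, with the intersection numbers of Reid's basis. -/
theorem gram_det_two_quadrics (m : ℕ) (hm : Even m) (h4 : 4 ≤ m)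
    {V : Type*} [AddCommGroup V] [Module ℚ V]
    (B : V →ₗ[ℚ] V →ₗ[ℚ] ℚ) (hBsymm : ∀ x y, B x y = B y x)
    (w : V) (z : Fin (m + 3) → V)
    (hww : B w w = 4)
    (hwz : ∀ i, B w (z i) = 1)
    (hzw : ∀ i, B (z i) w = 1)
    (hzz : ∀ i, B (z i) (z i) = (-1 : ℚ) ^ (m / 2) * (m / 4 + 1 : ℕ))
    (hzz' : ∀ i j, i ≠ j →
      B (z i) (z j) = (-1 : ℚ) ^ (m / 2 - 2) * ((m / 2 - 2) / 2 + 1 : ℕ)) :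
    letI zeta : V := (((m : ℚ) / 2 + 1) / ((m : ℚ) + 1)) • w
      - (1 / ((m : ℚ) + 1)) • ∑ i : Fin (m + 3), z i
    letI v : Option (Fin (m + 3)) → V :=
      fun a => Option.elim a ((2 : ℚ) • zeta - w) z
    letI G : Matrix (Option (Fin (m + 3))) (Option (Fin (m + 3))) ℚ :=
      Matrix.of fun a b => B (v a) (v b)
    (m % 4 = 2 → G.det = (-1 : ℚ) ^ (m + 3)) ∧ (m % 4 = 0 → G.det = 1) :=
  gram_det_two_quadrics_general m h4 B w z hww hwz hzw hzz hzz'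
end
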